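/- arXiv:2003.09667 — 2 statements merged into one kernel-verified Lean document; each statement's English description precedes it below -/
import Mathlib

section
/- Given a quantified formula ∃X[F(X,Y)], let C be a clause of F that is blocked in F at a variable w ∈ X with respect to Y. Then F \ {C} es-implies C with respect to Y; in particular, ∃X[F] ≡ ∃X[F \ {C}], i.e., for every full assignment y to Y, F|_y is satisfiable if and only if (F \ {C})|_y is satisfiable. -/
open scoped Classical

noncomputable section

/-- A clause: a finite set of literals `(variable, polarity)`. -/
abbrev Clause (V : Type) : Type := Finset (V × Bool)

/-- A CNF formula: a finite set of clauses. -/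
abbrev CNF (V : Type) : Type := Finset (Finset (V × Bool))

/-- A full assignment `α` satisfies a clause if it satisfies some literal of it. -/
def satClause {V : Type} (α : V → Bool) (C : Clause V) : Prop := ∃ l ∈ C, α l.1 = l.2

/-- A full assignment satisfies a formula if it satisfies every clause of it. -/
def satCNF {V : Type} (α : V → Bool) (F : CNF V) : Prop := ∀ C ∈ F, satClause α C

/-- A formula is satisfiable if some full assignment satisfies it. -/
def satisfiable {V : Type} (F : CNF V) : Prop := ∃ α : V → Bool, satCNF α F

/-- A partial assignment (`none` = unassigned) satisfies a clause if it satisfies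
some literal of it. -/
def pSatClause {V : Type} (q : V → Option Bool) (C : Clause V) : Prop :=
  ∃ l ∈ C, q l.1 = some l.2

/-- Cofactor of a clause under a partial assignment: delete the falsified literals. -/
def cofClause {V : Type} (q : V → Option Bool) (C : Clause V) : Clause V :=
  C.filter fun l => q l.1 ≠ some (!l.2)

/-- Cofactor of a formula under a partial assignment: remove the satisfied clauses and
delete the falsified literals from the remaining clauses. -/
def cofCNF {V : Type} (q : V → Option Bool) (F : CNF V) : CNF V :=
  (F.filter fun C => ¬ pSatClause q C).image (cofClause q)

/-- The partial assignment induced by a full assignment `y` on the set `Y`. -/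
def restrict {V : Type} (Y : Set V) (y : V → Bool) : V → Option Bool :=
  fun v => if v ∈ Y then some (y v) else none

/-- `F` es-implies `G` with respect to `Y`: for every full assignment `y` to `Y`,
`(F ∧ G)|_y` and `F|_y` are equisatisfiable. -/
def esImplies {V : Type} (Y : Set V) (F G : CNF V) : Prop :=
  ∀ y : V → Bool,
    satisfiable (cofCNF (restrict Y y) (F ∪ G)) ↔ satisfiable (cofCNF (restrict Y y) F)

/-- Two clauses are resolvable on `w`: they have opposite literals of `w` and
opposite literals of no other variable. -/
def resolvable {V : Type} (w : V) (C1 C2 : Clause V) : Prop :=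
  (∃ b : Bool, (w, b) ∈ C1 ∧ (w, !b) ∈ C2) ∧
  ∀ (v : V) (b : Bool), v ≠ w → ¬ ((v, b) ∈ C1 ∧ (v, !b) ∈ C2)

/-- The partial assignment mapping `w` to `b` and leaving everything else unassigned. -/
def singleAsn {V : Type} (w : V) (b : Bool) : V → Option Bool :=
  fun v => if v = w then some b else none

/-- `C ∈ F` containing the literal `(w, b)` is blocked in `F` at `w` with respect to `Y`:
letting `G` be the set of clauses of `F` resolvable with `C` on `w`, the formula
`(F \ G)|_{w:=b}` es-implies `G|_{w:=b}` with respect to `Y`. -/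
def blocked {V : Type} (Y : Set V) (F : CNF V) (C : Clause V) (w : V) (b : Bool) : Prop :=
  C ∈ F ∧ (w, b) ∈ C ∧
  esImplies Y
    (cofCNF (singleAsn w b) (F \ F.filter fun D => resolvable w C D))
    (cofCNF (singleAsn w b) (F.filter fun D => resolvable w C D))

/-!
If a full assignment `β` extending `y` satisfies `F \ {C}` but not `C`, flip `β` at `w` so that
it satisfies `C` through the literal `(w, b)`. Every clause of `F` not resolvable with `C` on `w`
stays satisfied: if it relied on `(w, !b)`, it clashes with `C` on some other variable `v`, and
since `β` falsifies `C` it satisfies that literal of `v`. So, with `G` the clauses resolvable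
with `C` on `w`, `(F \ G)|_{w:=b}|_y` is satisfiable, hence, `C` being blocked, so is
`(F \ G ∪ G)|_{w:=b}|_y = F|_{w:=b}|_y`, and thus `F|_y`.
As `w ∉ Y`, the assignments `y` and `w := b` have disjoint domains, which is what makes the
cofactors compose.
-/

section Cofactor

variable {V : Type}

def Extends (q : V → Option Bool) (β : V → Bool) : Prop :=
  ∀ v c, q v = some c → β v = c

def override (q : V → Option Bool) (α : V → Bool) : V → Bool :=
  fun v => (q v).getD (α v)

lemma extends_override (q : V → Option Bool) (α : V → Bool) : Extends q (override q α) := by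
  intro v c hv
  simp [override, hv]

lemma satClause_cofClause {q : V → Option Bool} {β : V → Bool} (hext : Extends q β)
    {D : Clause V} (h : satClause β D) : satClause β (cofClause q D) := by
  obtain ⟨l, hl, hsat⟩ := h
  refine ⟨l, Finset.mem_filter.2 ⟨hl, fun hq => ?_⟩, hsat⟩
  have := hext _ _ hq
  simp [hsat] at this

lemma satCNF_cofCNF {q : V → Option Bool} {β : V → Bool} (hext : Extends q β)
    {F : CNF V} (h : satCNF β F) : satCNF β (cofCNF q F) := by
  intro D hD
  obtain ⟨E, ⟨hE, _⟩, rfl⟩ := by simpa only [cofCNF, Finset.mem_image, Finset.mem_filter] using hD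
  exact satClause_cofClause hext (h E hE)

lemma satClause_override_of_satClause_cofClause {q : V → Option Bool} {α : V → Bool}
    {D : Clause V} (h : satClause α (cofClause q D)) : satClause (override q α) D := by
  obtain ⟨⟨v, c⟩, hl, hsat⟩ := h
  obtain ⟨hlD, hnot⟩ := Finset.mem_filter.1 hl
  refine ⟨(v, c), hlD, ?_⟩
  simp only [override] at hsat hnot ⊢
  rcases hq : q v with _ | d
  · simpa using hsat
  · cases c <;> cases d <;> simp_all

lemma satCNF_override_of_satCNF_cofCNF {q : V → Option Bool} {α : V → Bool} {F : CNF V}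
    (h : satCNF α (cofCNF q F)) : satCNF (override q α) F := by
  intro D hD
  by_cases hp : pSatClause q D
  · obtain ⟨l, hl, hq⟩ := hp
    exact ⟨l, hl, by simp [override, hq]⟩
  · exact satClause_override_of_satClause_cofClause <|
      h _ (Finset.mem_image_of_mem _ (Finset.mem_filter.2 ⟨hD, hp⟩))

lemma satisfiable_cofCNF_iff {q : V → Option Bool} {F : CNF V} :
    satisfiable (cofCNF q F) ↔ ∃ β, Extends q β ∧ satCNF β F :=
  ⟨fun ⟨α, hα⟩ => ⟨_, extends_override q α, satCNF_override_of_satCNF_cofCNF hα⟩,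
    fun ⟨β, hext, hβ⟩ => ⟨β, satCNF_cofCNF hext hβ⟩⟩

lemma satisfiable_cofCNF_cofCNF_iff {q r : V → Option Bool}
    (hdisj : ∀ v, q v = none ∨ r v = none) {F : CNF V} :
    satisfiable (cofCNF q (cofCNF r F)) ↔ ∃ γ, Extends q γ ∧ Extends r γ ∧ satCNF γ F := by
  rw [satisfiable_cofCNF_iff]
  constructor
  · rintro ⟨β, hq, hβ⟩
    refine ⟨override r β, fun v c hv => ?_, extends_override r β,
      satCNF_override_of_satCNF_cofCNF hβ⟩
    rcases hdisj v with h | h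
    · simp [h] at hv
    · simpa [override, h] using hq v c hv
  · rintro ⟨γ, hq, hr, hγ⟩
    exact ⟨γ, hq, satCNF_cofCNF hr hγ⟩

lemma satisfiable_cofCNF_of_subset {q : V → Option Bool} {F F' : CNF V} (hsub : F' ⊆ F)
    (h : satisfiable (cofCNF q F)) : satisfiable (cofCNF q F') := by
  obtain ⟨β, hext, hβ⟩ := satisfiable_cofCNF_iff.1 h
  exact satisfiable_cofCNF_iff.2 ⟨β, hext, fun D hD => hβ D (hsub hD)⟩

lemma cofCNF_union (q : V → Option Bool) (F G : CNF V) :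
    cofCNF q (F ∪ G) = cofCNF q F ∪ cofCNF q G := by
  simp [cofCNF, Finset.filter_union, Finset.image_union]

end Cofactor

section Blocked

variable {V : Type}

lemma satClause_update_of_not_resolvable {β : V → Bool} {C D : Clause V} {w : V} {b : Bool}
    (hwb : (w, b) ∈ C) (hC : ¬ satClause β C) (hD : satClause β D)
    (hres : ¬ resolvable w C D) : satClause (Function.update β w b) D := by
  obtain ⟨⟨v, c⟩, hvD, hβv⟩ := hD
  by_cases hvw : v = w
  · subst hvw
    by_cases hcb : c = b
    · exact ⟨(v, c), hvD, by simp [hcb]⟩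
    have hclash : ∃ u e, u ≠ v ∧ (u, e) ∈ C ∧ (u, !e) ∈ D := by
      by_contra! hnone
      refine hres ⟨⟨b, hwb, ?_⟩, fun u e hu h => hnone u e hu h.1 h.2⟩
      exact Bool.eq_not.2 hcb ▸ hvD
    obtain ⟨u, e, huv, huC, huD⟩ := hclash
    have hβu : β u = !e := Bool.eq_not.2 fun h => hC ⟨(u, e), huC, h⟩
    exact ⟨(u, !e), huD, by simp [huv, hβu]⟩
  · exact ⟨(v, c), hvD, by simp [hvw, hβv]⟩

lemma satCNF_update_sdiff_resolvable {β : V → Bool} {F : CNF V} {C : Clause V} {w : V}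
    {b : Bool} (hwb : (w, b) ∈ C) (hC : ¬ satClause β C) (hF : satCNF β (F.erase C)) :
    satCNF (Function.update β w b) (F \ F.filter fun D => resolvable w C D) := by
  intro D hD
  obtain ⟨hDF, hDG⟩ := Finset.mem_sdiff.1 hD
  by_cases hDC : D = C
  · exact ⟨(w, b), hDC ▸ hwb, by simp⟩
  · exact satClause_update_of_not_resolvable hwb hC (hF D (Finset.mem_erase.2 ⟨hDC, hDF⟩))
      fun hres => hDG (Finset.mem_filter.2 ⟨hDF, hres⟩)

lemma Extends.update {q : V → Option Bool} {β : V → Bool} (hext : Extends q β) {w : V}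
    (hw : q w = none) (b : Bool) : Extends q (Function.update β w b) := by
  intro v c hv
  have hvw : v ≠ w := by rintro rfl; simp [hw] at hv
  simpa [hvw] using hext v c hv

lemma extends_singleAsn_update (β : V → Bool) (w : V) (b : Bool) :
    Extends (singleAsn w b) (Function.update β w b) := by
  intro v c hv
  by_cases hvw : v = w
  · subst hvw; simpa [singleAsn] using hv
  · simp [singleAsn, hvw] at hv

lemma restrict_eq_none_or_singleAsn_eq_none {Y : Set V} {w : V} (hw : w ∉ Y) (y : V → Bool)
    (b : Bool) (v : V) : restrict Y y v = none ∨ singleAsn w b v = none := by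
  by_cases hvw : v = w
  · subst hvw; simp [restrict, hw]
  · simp [singleAsn, hvw]

lemma satisfiable_cofCNF_of_blocked {Y : Set V} {F : CNF V} {C : Clause V} {w : V} {b : Bool}
    (hblk : blocked Y F C w b) (hw : w ∉ Y) (y : V → Bool)
    (h : satisfiable (cofCNF (restrict Y y) (F.erase C))) :
    satisfiable (cofCNF (restrict Y y) F) := by
  obtain ⟨-, hwb, hes⟩ := hblk
  obtain ⟨β, hext, hβ⟩ := satisfiable_cofCNF_iff.1 h
  by_cases hC : satClause β C
  · refine satisfiable_cofCNF_iff.2 ⟨β, hext, fun D hD => ?_⟩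
    by_cases hDC : D = C
    · exact hDC ▸ hC
    · exact hβ D (Finset.mem_erase.2 ⟨hDC, hD⟩)
  have hdisj := restrict_eq_none_or_singleAsn_eq_none hw y b
  have hFG : satisfiable (cofCNF (restrict Y y)
      (cofCNF (singleAsn w b) (F \ F.filter fun D => resolvable w C D))) :=
    (satisfiable_cofCNF_cofCNF_iff hdisj).2
      ⟨_, hext.update (by simp [restrict, hw]) b, extends_singleAsn_update β w b,
        satCNF_update_sdiff_resolvable hwb hC hβ⟩
  have hF := (hes y).2 hFG
  rw [← cofCNF_union, Finset.sdiff_union_of_subset (Finset.filter_subset _ F)] at hF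
  obtain ⟨γ, hγ, -, hγF⟩ := (satisfiable_cofCNF_cofCNF_iff hdisj).1 hF
  exact satisfiable_cofCNF_iff.2 ⟨γ, hγ, hγF⟩

end Blocked

theorem stmt_1_general (V : Type) (X Y : Set V) (hpart : X = Yᶜ)
    (F : CNF V) (C : Clause V) (w : V) (b : Bool)
    (hw : w ∈ X) (hblk : blocked Y F C w b) :
    esImplies Y (F.erase C) {C} ∧
    ∀ y : V → Bool,
      satisfiable (cofCNF (restrict Y y) F) ↔
        satisfiable (cofCNF (restrict Y y) (F.erase C)) := by
  have hwY : w ∉ Y := by rwa [hpart] at hw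
  have hequisat : ∀ y : V → Bool, satisfiable (cofCNF (restrict Y y) F) ↔
      satisfiable (cofCNF (restrict Y y) (F.erase C)) := fun y =>
    ⟨satisfiable_cofCNF_of_subset (Finset.erase_subset C F),
      satisfiable_cofCNF_of_blocked hblk hwY y⟩
  have hF : F.erase C ∪ {C} = F := by
    rw [Finset.union_comm, ← Finset.insert_eq, Finset.insert_erase hblk.1]
  exact ⟨fun y => by rw [hF]; exact hequisat y, hequisat⟩

/-- Given `∃X[F(X,Y)]` with `X, Y` partitioning the variables, if a clause
`C` of `F` is blocked in `F` at `w ∈ X` with respect to `Y`, then `F \ {C}` es-implies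
`C` with respect to `Y`; in particular `∃X[F] ≡ ∃X[F \ {C}]` (for every full assignment
`y` to `Y`, `F|_y` is satisfiable iff `(F \ {C})|_y` is satisfiable). -/
theorem stmt_1 (V : Type) (X Y : Set V) (hpart : X = Yᶜ)
    (F : CNF V) (C : Clause V) (w : V) (b : Bool)
    (hC : C ∈ F) (hw : w ∈ X) (hblk : blocked Y F C w b) :
    esImplies Y (F.erase C) {C} ∧
    ∀ y : V → Bool,
      satisfiable (cofCNF (restrict Y y) F) ↔
        satisfiable (cofCNF (restrict Y y) (F.erase C)) :=
  stmt_1_general V X Y hpart F C w b hw hblk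
end
end

section
/- Let the variable set V be partitioned into sets X, Y, Z. Let A be a CNF formula whose clauses contain only variables of X ∪ Y, and B a CNF formula whose clauses contain only variables of Y ∪ Z. Suppose A ∧ B is unsatisfiable. Let W = X ∪ Z and let A* be a CNF formula whose clauses contain only variables of Y such that ∃W[A ∧ B] ≡ A* ∧ ∃W[B]. Suppose in addition that every full assignment satisfying A satisfies A*. Then A* is an interpolant of the pair (A, B): (i) A implies A*, (ii) A* ∧ B is unsatisfiable, and (iii) the clauses of A* contain only variables of Y, the variables shared by A and B. -/
open scoped Classical

noncomputable section

lemma sat_cof {V : Type} (q : V → Option Bool) (F : CNF V)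
    (h : satisfiable (cofCNF q F)) : satisfiable F := by
  obtain ⟨γ, hγ⟩ := h
  refine ⟨fun v => (q v).getD (γ v), fun C hC => ?_⟩
  by_cases hp : pSatClause q C
  · obtain ⟨l, hl, hq⟩ := hp
    exact ⟨l, hl, by simp [hq]⟩
  · have : cofClause q C ∈ cofCNF q F := by
      simp only [cofCNF, Finset.mem_image]
      exact ⟨C, Finset.mem_filter.2 ⟨hC, hp⟩, rfl⟩
    obtain ⟨l, hl, hγl⟩ := hγ _ this
    rw [cofClause, Finset.mem_filter] at hl
    refine ⟨l, hl.1, ?_⟩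
    cases hq : q l.1 with
    | none => simp [hq, hγl]
    | some b =>
      have : b ≠ !l.2 := fun h => hl.2 (by rw [hq, h])
      simp [hq]
      cases b <;> cases hb : l.2 <;> simp_all

lemma cof_sat {V : Type} (Y : Set V) (α : V → Bool) (F : CNF V)
    (h : satCNF α F) : satisfiable (cofCNF (restrict Y α) F) := by
  refine ⟨α, fun C hC => ?_⟩
  simp only [cofCNF, Finset.mem_image] at hC
  obtain ⟨D, hD, rfl⟩ := hC
  obtain ⟨l, hl, hαl⟩ := h D (Finset.mem_filter.1 hD).1
  refine ⟨l, Finset.mem_filter.2 ⟨hl, ?_⟩, hαl⟩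
  unfold restrict
  split
  · simp [hαl]
  · simp

/-- in the setting of PQE-based interpolation, if moreover `A` implies
`A*`, then `A*` is an interpolant of `(A, B)`: `A` implies `A*`, `A* ∧ B` is
unsatisfiable, and the clauses of `A*` contain only the shared variables `Y`. -/
theorem stmt_8 (V : Type) (X Y Z : Set V)
    (hXY : Disjoint X Y) (hXZ : Disjoint X Z) (hYZ : Disjoint Y Z)
    (hcover : X ∪ Y ∪ Z = Set.univ)
    (A B As : CNF V)
    (hA : ∀ C ∈ A, ∀ l ∈ C, l.1 ∈ X ∪ Y)
    (hB : ∀ C ∈ B, ∀ l ∈ C, l.1 ∈ Y ∪ Z)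
    (hunsat : ¬ satisfiable (A ∪ B))
    (hAsY : ∀ C ∈ As, ∀ l ∈ C, l.1 ∈ Y)
    (hsol : ∀ y : V → Bool,
      satisfiable (cofCNF (restrict Y y) (A ∪ B)) ↔
        (satCNF y As ∧ satisfiable (cofCNF (restrict Y y) B)))
    (hAimp : ∀ α : V → Bool, satCNF α A → satCNF α As) :
    (∀ α : V → Bool, satCNF α A → satCNF α As) ∧
    ¬ satisfiable (As ∪ B) ∧
    (∀ C ∈ As, ∀ l ∈ C, l.1 ∈ Y) := by
  refine ⟨hAimp, ?_, hAsY⟩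
  rintro ⟨α, hα⟩
  have hAs : satCNF α As := fun C hC => hα C (Finset.mem_union_left _ hC)
  have hBsat : satCNF α B := fun C hC => hα C (Finset.mem_union_right _ hC)
  have := (hsol α).2 ⟨hAs, cof_sat Y α B hBsat⟩
  exact hunsat (sat_cof _ _ this)
end
end
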